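/- arXiv:2209.02135 — 4 statements merged into one kernel-verified Lean document; each statement's English description precedes it below -/
import Mathlib

section
/- For any real a > 0, real t > 0, and natural number u, the rising factorial (a·t)_{(u)} equals the sum over v from 0 to u of C(u, v; a) · (t)_{(v)}, where C(u, v; a) is the generalized factorial coefficient. -/
open Finset

noncomputable def risingFactorial (x : ℝ) (u : ℕ) : ℝ :=
  ∏ j ∈ Finset.range u, (x + j)

noncomputable def genFacCoef (u v : ℕ) (a : ℝ) : ℝ :=
  (1 / (v.factorial : ℝ)) *
    ∑ i ∈ Finset.range (v + 1),
      (-1 : ℝ) ^ i * (v.choose i : ℝ) * risingFactorial (-(i * a)) u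

def stirling1 : ℕ → ℕ → ℕ
  | 0, 0 => 1
  | 0, _ + 1 => 0
  | _ + 1, 0 => 0
  | u + 1, v + 1 => u * stirling1 u (v + 1) + stirling1 u v

/-!
As a function of `t`, `(a t)_(u)` is a polynomial of degree at most `u`, so Newton's
interpolation formula expands it in the falling factorials of `-t`, which are up to sign the
rising factorials `(t)_(v)`. The `v`-th coefficient is `(-1)^v / v!` times the `v`-th forward
difference at `0` of `s ↦ (-a s)_(u)`, and writing that difference as an alternating binomial
sum gives exactly `C(u, v; a)`.
-/

open Polynomial Nat

theorem Polynomial.eval_eq_sum_fwdDiff_iter_mul_descPochhammer {K : Type*} [Field K] [CharZero K]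
    {P : K[X]} {u : ℕ} (hP : P.natDegree ≤ u) (x : K) :
    P.eval x = ∑ k ∈ range (u + 1),
      (k ! : K)⁻¹ * (fwdDiff 1)^[k] P.eval 0 * (descPochhammer K k).eval x := by
  suffices newton : P = ∑ k ∈ range (u + 1),
      C ((k ! : K)⁻¹ * (fwdDiff 1)^[k] P.eval 0) * descPochhammer K k by
    conv_lhs => rw [newton]
    simp [eval_finsetSum]
  refine eq_of_infinite_eval_eq _ _ <| (Set.infinite_range_of_injective Nat.cast_injective).mono ?_
  rintro _ ⟨n, rfl⟩
  have gregory_newton :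
      P.eval (n : K) = ∑ k ∈ range (n + 1), n.choose k * (fwdDiff 1)^[k] P.eval 0 := by
    simpa using shift_eq_sum_fwdDiff_iter 1 P.eval n 0
  have truncate : ∑ k ∈ range (n + 1), n.choose k * (fwdDiff 1)^[k] P.eval 0
      = ∑ k ∈ range (u + 1), (n.choose k : K) * (fwdDiff 1)^[k] P.eval 0 := by
    calc _ = ∑ k ∈ range (n + u + 1), (n.choose k : K) * (fwdDiff 1)^[k] P.eval 0 :=
          sum_subset (range_subset_range.2 (by omega)) fun k hk hk' => by
            rw [mem_range] at hk hk'
            rw [choose_eq_zero_of_lt (by omega), cast_zero, zero_mul]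
      _ = _ := (sum_subset (range_subset_range.2 (by omega)) fun k hk hk' => by
            rw [mem_range] at hk hk'
            rw [fwdDiff_iter_eq_zero_of_degree_lt (by omega), Pi.zero_apply, mul_zero]).symm
  show _ = eval _ _
  rw [gregory_newton, truncate, eval_finsetSum]
  refine sum_congr rfl fun k _ => ?_
  have : (k ! : K) ≠ 0 := Nat.cast_ne_zero.2 (factorial_ne_zero k)
  rw [eval_mul, eval_C, descPochhammer_eval_eq_descFactorial, descFactorial_eq_factorial_mul_choose]
  field_simp
  push_cast
  ring

theorem descPochhammer_eval_neg {R : Type*} [CommRing R] (r : R) (k : ℕ) :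
    (descPochhammer R k).eval (-r) = (-1) ^ k * (ascPochhammer R k).eval r := by
  rw [← neg_neg r, ascPochhammer_eval_neg_eq_descPochhammer, neg_neg, ← mul_assoc, ← pow_add,
    Even.neg_one_pow ⟨k, rfl⟩, one_mul]

theorem risingFactorial_eq_eval_ascPochhammer (x : ℝ) (u : ℕ) :
    risingFactorial x u = (ascPochhammer ℝ u).eval x := by
  induction u with
  | zero => simp [risingFactorial]
  | succ u ih =>
    rw [risingFactorial, prod_range_succ, ← risingFactorial, ih, ascPochhammer_succ_eval]

theorem genFacCoef_eq_fwdDiff_iter (u v : ℕ) (a : ℝ) :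
    genFacCoef u v a
      = (v ! : ℝ)⁻¹ * (-1) ^ v *
          (fwdDiff 1)^[v] (fun s : ℝ => risingFactorial (-(s * a)) u) 0 := by
  rw [genFacCoef, fwdDiff_iter_eq_sum_shift (1 : ℝ), one_div, mul_assoc]
  simp only [mul_sum]
  refine sum_congr rfl fun i hi => ?_
  rw [mem_range] at hi
  have hsign : (-1 : ℝ) ^ v * (-1) ^ (v - i) = (-1) ^ i := by
    rw [← pow_add, show v + (v - i) = 2 * (v - i) + i by omega, pow_add, pow_mul,
      neg_one_sq, one_pow, one_mul]
  simp only [zsmul_eq_mul, Int.cast_mul, Int.cast_pow, Int.cast_neg, Int.cast_one,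
    Int.cast_natCast, nsmul_eq_mul, mul_one, zero_add]
  linear_combination -(v ! : ℝ)⁻¹ * (v.choose i : ℝ) * risingFactorial (-(i * a)) u * hsign

theorem risingFactorial_mul_eq_sum_genFacCoef_general (a t : ℝ) (u : ℕ) :
    risingFactorial (a * t) u
      = ∑ v ∈ Finset.range (u + 1), genFacCoef u v a * risingFactorial t v := by
  set Q : ℝ[X] := (ascPochhammer ℝ u).comp (C (-a) * X)
  have eval_Q : Q.eval = fun s => risingFactorial (-(s * a)) u := by
    ext s
    simp only [Q, eval_comp, eval_mul, eval_C, eval_X, risingFactorial_eq_eval_ascPochhammer]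
    congr 1
    ring
  have natDegree_Q : Q.natDegree ≤ u := by
    calc Q.natDegree
      _ ≤ (ascPochhammer ℝ u).natDegree * (C (-a) * X).natDegree := natDegree_comp_le
      _ ≤ u * 1 := by
        gcongr
        · rw [ascPochhammer_natDegree]
        · exact (natDegree_C_mul_le _ _).trans natDegree_X_le
      _ = u := mul_one u
  calc risingFactorial (a * t) u
    _ = Q.eval (-t) := by rw [congrFun eval_Q (-t), neg_mul, neg_neg, mul_comm]
    _ = _ := Q.eval_eq_sum_fwdDiff_iter_mul_descPochhammer natDegree_Q (-t)
    _ = _ := sum_congr rfl fun v _ => by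
      rw [genFacCoef_eq_fwdDiff_iter, descPochhammer_eval_neg,
        ← risingFactorial_eq_eval_ascPochhammer, eval_Q]
      ring

theorem risingFactorial_mul_eq_sum_genFacCoef (a t : ℝ) (ha : 0 < a) (ht : 0 < t) (u : ℕ) :
    risingFactorial (a * t) u
      = ∑ v ∈ Finset.range (u + 1), genFacCoef u v a * risingFactorial t v :=
  risingFactorial_mul_eq_sum_genFacCoef_general a t u
end

section
/- Let θ > 0, let J ≥ 1 be an integer, and let c be a natural number with c ≥ 1. Then Σ_{r=1}^{c} binom(c, r) · (r-1)! · (θ/J)_{(c-r)} / (θ/J)_{(c)} = ψ(1 - θ/J - c) - ψ(1 - θ/J), where ψ is the digamma function, provided θ/J is not a nonnegative integer (so that the digamma arguments avoid poles). -/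
/-! With `x = θ / J`, both sides equal `∑_{j < c} 1 / (x + j)`, the logarithmic derivative of
`(x)_c`. On the digamma side this is `ψ (y + 1) = ψ y + 1 / y` applied `c` times below `1 - x`.
For the sum, let `A_c(x)` be its numerator. Pascal's rule splits `A_{c+1}(x)` into
`x A_c(x + 1)` and the Chu–Vandermonde sum `∑_s C(c, s) (1)_s (x)_{c-s} = (x + 1)_c`, so
`A_{c+1}(x) = (x + 1)_c + x A_c(x + 1)`, and induction on `c`
gives `A_c(x) = (x)_c ∑_{j<c} 1/(x+j)`.
-/

open Finset

noncomputable def digamma (x : ℝ) : ℝ := deriv (fun y => Real.log (Real.Gamma y)) x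

open Nat

theorem risingFactorial_zero (x : ℝ) : risingFactorial x 0 = 1 := rfl

theorem risingFactorial_succ_right (x : ℝ) (n : ℕ) :
    risingFactorial x (n + 1) = risingFactorial x n * (x + n) :=
  prod_range_succ _ _

theorem risingFactorial_succ_left (x : ℝ) (n : ℕ) :
    risingFactorial x (n + 1) = x * risingFactorial (x + 1) n := by
  simp only [risingFactorial, prod_range_succ', Nat.cast_add, Nat.cast_one, Nat.cast_zero,
    add_zero, add_assoc, add_comm (1 : ℝ), mul_comm x]

theorem risingFactorial_ne_zero {x : ℝ} (hx : ∀ m : ℕ, x ≠ -m) (n : ℕ) :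
    risingFactorial x n ≠ 0 :=
  prod_ne_zero_iff.mpr fun j _ h => hx j (by linarith)

theorem sum_range_risingFactorial_div_factorial (x : ℝ) (c : ℕ) :
    ∑ k ∈ range (c + 1), risingFactorial x k / k ! = risingFactorial (x + 1) c / c ! := by
  induction c with
  | zero => simp [risingFactorial_zero]
  | succ c ih =>
    rw [sum_range_succ, ih, risingFactorial_succ_right (x + 1), risingFactorial_succ_left x,
      factorial_succ]
    push_cast
    field_simp
    ring

theorem sum_range_choose_mul_factorial_mul_risingFactorial (x : ℝ) (c : ℕ) :
    ∑ s ∈ range (c + 1), (c.choose s : ℝ) * s ! * risingFactorial x (c - s)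
      = risingFactorial (x + 1) c := by
  have hc : (c ! : ℝ) ≠ 0 := by positivity
  calc ∑ s ∈ range (c + 1), (c.choose s : ℝ) * s ! * risingFactorial x (c - s)
      = ∑ k ∈ range (c + 1), (c ! : ℝ) * (risingFactorial x k / k !) := by
        rw [← sum_range_reflect]
        refine sum_congr rfl fun k hk => ?_
        have hk : k ≤ c := Nat.lt_succ_iff.mp (mem_range.mp hk)
        have hchoose := congrArg (Nat.cast (R := ℝ))
          (choose_mul_factorial_mul_factorial (Nat.sub_le c k))
        rw [Nat.sub_sub_self hk] at hchoose
        rw [show c + 1 - 1 - k = c - k by omega, Nat.sub_sub_self hk]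
        push_cast at hchoose
        field_simp
        linear_combination risingFactorial x k * hchoose
    _ = risingFactorial (x + 1) c := by
        rw [← mul_sum, sum_range_risingFactorial_div_factorial, mul_div_cancel₀ _ hc]

/-- The numerator of the sum in `sum_eq_digamma_diff`, reindexed by `s = r - 1`. -/
noncomputable def chooseRisingSum (c : ℕ) (x : ℝ) : ℝ :=
  ∑ s ∈ range c, (c.choose (s + 1) : ℝ) * s ! * risingFactorial x (c - (s + 1))

theorem chooseRisingSum_succ (c : ℕ) (x : ℝ) :
    chooseRisingSum (c + 1) x = risingFactorial (x + 1) c + x * chooseRisingSum c (x + 1) := by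
  have hpascal : ∀ s ∈ range (c + 1),
      ((c + 1).choose (s + 1) : ℝ) * s ! * risingFactorial x (c + 1 - (s + 1))
        = (c.choose s : ℝ) * s ! * risingFactorial x (c - s)
          + (c.choose (s + 1) : ℝ) * s ! * risingFactorial x (c - s) := by
    intro s _
    rw [choose_succ_succ, Nat.add_sub_add_right]
    push_cast
    ring
  have hshift : ∀ s ∈ range c, (c.choose (s + 1) : ℝ) * s ! * risingFactorial x (c - s)
      = x * ((c.choose (s + 1) : ℝ) * s ! * risingFactorial (x + 1) (c - (s + 1))) := by
    intro s hs
    rw [show c - s = c - (s + 1) + 1 by have := mem_range.mp hs; omega, risingFactorial_succ_left]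
    ring
  rw [chooseRisingSum, sum_congr rfl hpascal, sum_add_distrib,
    sum_range_choose_mul_factorial_mul_risingFactorial, sum_range_succ, choose_succ_self,
    sum_congr rfl hshift, ← mul_sum, chooseRisingSum]
  simp

theorem chooseRisingSum_eq {x : ℝ} (hx : ∀ m : ℕ, x ≠ -m) (c : ℕ) :
    chooseRisingSum c x = risingFactorial x c * ∑ j ∈ range c, (x + j)⁻¹ := by
  induction c generalizing x with
  | zero => simp [chooseRisingSum]
  | succ c ih =>
    have hx0 : x ≠ 0 := by simpa using hx 0
    have hx1 : ∀ m : ℕ, x + 1 ≠ -m := fun m h => hx (m + 1) (by push_cast; linarith)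
    rw [chooseRisingSum_succ, ih hx1, risingFactorial_succ_left, sum_range_succ']
    push_cast
    simp only [add_zero, add_assoc, add_comm (1 : ℝ)]
    field_simp
    ring

theorem digamma_add_one {y : ℝ} (hy : ∀ m : ℕ, y ≠ -m) :
    digamma (y + 1) = digamma y + y⁻¹ := by
  have hy0 : y ≠ 0 := by simpa using hy 0
  have hΓ : Real.Gamma y ≠ 0 := Real.Gamma_ne_zero hy
  have hdΓ : DifferentiableAt ℝ Real.Gamma y := Real.differentiableAt_Gamma hy
  have hlog : (fun z => Real.log (Real.Gamma (z + 1)))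
      =ᶠ[nhds y] fun z => Real.log z + Real.log (Real.Gamma z) := by
    filter_upwards [eventually_ne_nhds hy0, hdΓ.continuousAt.eventually_ne hΓ] with z hz hΓz
    rw [Real.Gamma_add_one hz, Real.log_mul hz hΓz]
  rw [digamma, ← deriv_comp_add_const, hlog.deriv_eq,
    deriv_fun_add (Real.differentiableAt_log hy0) (hdΓ.log hΓ), Real.deriv_log, digamma, add_comm]

theorem digamma_sub_nat {y : ℝ} (hy : ∀ m : ℤ, y ≠ m) (n : ℕ) :
    digamma (y - n) = digamma y - ∑ k ∈ range n, (y - (k + 1))⁻¹ := by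
  induction n with
  | zero => simp
  | succ n ih =>
    have hstep := digamma_add_one (y := y - (n + 1))
      fun m h => hy (n + 1 - m) (by push_cast; linarith)
    rw [show y - (n + 1) + 1 = y - n by ring] at hstep
    rw [sum_range_succ, Nat.cast_succ]
    linarith

theorem sum_eq_digamma_diff_general (θ : ℝ) (hθ : 0 < θ) (J : ℕ) (c : ℕ)
    (hnp : ∀ m : ℕ, θ / J ≠ m) :
    ∑ r ∈ Finset.Icc 1 c,
        (c.choose r : ℝ) * ((r - 1).factorial : ℝ) * risingFactorial (θ / J) (c - r)
          / risingFactorial (θ / J) c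
      = digamma (1 - θ / J - c) - digamma (1 - θ / J) := by
  set x := θ / J
  have hx : ∀ m : ℤ, x ≠ m := by
    intro m hm
    lift m to ℕ using (by exact_mod_cast hm ▸ (by positivity : 0 ≤ x))
    exact hnp m (by exact_mod_cast hm)
  have hxneg : ∀ m : ℕ, x ≠ -m := fun m => by exact_mod_cast hx (-m)
  have hsum : ∑ r ∈ Icc 1 c, (c.choose r : ℝ) * (r - 1)! * risingFactorial x (c - r)
      = chooseRisingSum c x := by
    rw [chooseRisingSum, ← Ico_add_one_right_eq_Icc, sum_Ico_eq_sum_range]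
    simp [add_comm 1]
  rw [← sum_div, hsum, chooseRisingSum_eq hxneg,
    mul_div_cancel_left₀ _ (risingFactorial_ne_zero hxneg c),
    digamma_sub_nat (fun m h => hx (1 - m) (by push_cast; linarith)), sub_sub_cancel_left,
    ← sum_neg_distrib]
  refine sum_congr rfl fun k _ => ?_
  rw [← inv_neg]
  congr 1
  ring

theorem sum_eq_digamma_diff (θ : ℝ) (hθ : 0 < θ) (J : ℕ) (hJ : 1 ≤ J) (c : ℕ) (hc : 1 ≤ c)
    (hnp : ∀ m : ℕ, θ / J ≠ m) :
    ∑ r ∈ Finset.Icc 1 c,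
        (c.choose r : ℝ) * ((r - 1).factorial : ℝ) * risingFactorial (θ / J) (c - r)
          / risingFactorial (θ / J) c
      = digamma (1 - θ / J - c) - digamma (1 - θ / J) :=
  sum_eq_digamma_diff_general θ hθ J c hnp
end

section
/- Let θ > 0, J ≥ 1 be an integer, n ≥ 1, and let c₁,…,c_J be nonnegative integers summing to n. Define for r ≥ 0 the quantity p̃_r = (θ/J)·r!/(θ+n) · Σ_{j=1}^{J} binom(c_j, r) · (θ/J)_{(c_j - r)} / (θ/J)_{(c_j)}. Then Σ_{r=0}^{n} p̃_r = 1. -/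
open Finset

/-!
Within a single cell of count `k`, with `a = θ / J`, the identity `r! * C(k, r) = k^(r)` (falling
factorial) and the recurrence `(a + 1)_(k+1) = (a)_(k+1) + (k + 1) (a + 1)_k` give
`∑_r k^(r) (a)_(k-r) = (a + 1)_k`, hence
`a ∑_r r! C(k, r) (a)_(k-r) / (a)_k = a (a + 1)_k / (a)_k = a + k`.
Summing over the `J` cells yields `(J a + n) / (θ + n) = 1`.
-/

lemma risingFactorial_pos {x : ℝ} (hx : 0 < x) (u : ℕ) : 0 < risingFactorial x u :=
  prod_pos fun _ _ => by positivity

lemma risingFactorial_succ (x : ℝ) (u : ℕ) :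
    risingFactorial x (u + 1) = risingFactorial x u * (x + u) :=
  prod_range_succ _ _

lemma risingFactorial_succ' (x : ℝ) (u : ℕ) :
    risingFactorial x (u + 1) = x * risingFactorial (x + 1) u := by
  rw [risingFactorial, prod_range_succ', mul_comm]
  simp only [Nat.cast_zero, add_zero, risingFactorial, Nat.cast_succ, add_assoc, add_comm (1 : ℝ)]

lemma sum_descFactorial_mul_risingFactorial (a : ℝ) (k : ℕ) :
    ∑ r ∈ range (k + 1), (k.descFactorial r : ℝ) * risingFactorial a (k - r)
      = risingFactorial (a + 1) k := by
  induction k with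
  | zero => simp [risingFactorial]
  | succ k ih =>
    calc ∑ r ∈ range (k + 2), ((k + 1).descFactorial r : ℝ) * risingFactorial a (k + 1 - r)
        = (k + 1) * ∑ r ∈ range (k + 1), (k.descFactorial r : ℝ) * risingFactorial a (k - r)
            + risingFactorial a (k + 1) := by
          simp only [sum_range_succ' _ (k + 1), Nat.succ_descFactorial_succ, Nat.descFactorial_zero,
            Nat.add_sub_add_right, Nat.sub_zero, mul_sum]
          push_cast
          simp only [mul_assoc, one_mul]
      _ = risingFactorial (a + 1) (k + 1) := by
        rw [ih, risingFactorial_succ', risingFactorial_succ (a + 1)]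
        ring

lemma sum_coverage_cell {a : ℝ} {k : ℕ} (ha : risingFactorial a k ≠ 0) (m : ℕ) (hkm : k ≤ m) :
    ∑ r ∈ range (m + 1), a * r.factorial * (k.choose r : ℝ) * risingFactorial a (k - r)
        / risingFactorial a k = a + k := by
  have hvanish : ∀ r ∈ range (m + 1), r ∉ range (k + 1) →
      a * r.factorial * (k.choose r : ℝ) * risingFactorial a (k - r) / risingFactorial a k = 0 := by
    intro r _ hr
    rw [Nat.choose_eq_zero_of_lt (by simpa using hr)]
    simp
  rw [← sum_subset (range_subset_range.2 (by omega)) hvanish, ← sum_div]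
  simp only [mul_assoc, ← mul_sum]
  simp only [← mul_assoc, ← Nat.cast_mul, ← Nat.descFactorial_eq_factorial_mul_choose]
  rw [sum_descFactorial_mul_risingFactorial, div_eq_iff ha, ← risingFactorial_succ',
    risingFactorial_succ]
  ring

theorem sum_coverage_estimators_eq_one_general (θ : ℝ) (hθ : 0 < θ) (J : ℕ) (hJ : 1 ≤ J)
    (n : ℕ) (c : Fin J → ℕ) (hc : ∑ j, c j = n) :
    ∑ r ∈ Finset.range (n + 1),
        (θ / J) * (r.factorial : ℝ) / (θ + n) *
          ∑ j, ((c j).choose r : ℝ) * risingFactorial (θ / J) (c j - r)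
            / risingFactorial (θ / J) (c j)
      = 1 := by
  have hJ0 : (J : ℝ) ≠ 0 := by positivity
  have hcell : ∀ j, ∑ r ∈ range (n + 1), θ / J * r.factorial * ((c j).choose r : ℝ)
      * risingFactorial (θ / J) (c j - r) / risingFactorial (θ / J) (c j) = θ / J + c j :=
    fun j => sum_coverage_cell (risingFactorial_pos (by positivity) _).ne' n
      (hc ▸ single_le_sum (fun _ _ => Nat.zero_le _) (mem_univ j))
  calc _ = (∑ j, ∑ r ∈ range (n + 1), θ / J * r.factorial * ((c j).choose r : ℝ)
      * risingFactorial (θ / J) (c j - r) / risingFactorial (θ / J) (c j)) / (θ + n) := by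
        simp only [mul_sum, sum_div]
        rw [sum_comm]
        exact sum_congr rfl fun _ _ => sum_congr rfl fun _ _ => by ring
    _ = (J * (θ / J) + n) / (θ + n) := by
        simp only [hcell, sum_add_distrib, sum_const, card_univ, Fintype.card_fin, nsmul_eq_mul]
        rw [← hc, Nat.cast_sum]
    _ = 1 := by rw [mul_div_cancel₀ _ hJ0, div_self (by positivity)]

theorem sum_coverage_estimators_eq_one (θ : ℝ) (hθ : 0 < θ) (J : ℕ) (hJ : 1 ≤ J)
    (n : ℕ) (hn : 1 ≤ n) (c : Fin J → ℕ) (hc : ∑ j, c j = n) :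
    ∑ r ∈ Finset.range (n + 1),
        (θ / J) * (r.factorial : ℝ) / (θ + n) *
          ∑ j, ((c j).choose r : ℝ) * risingFactorial (θ / J) (c j - r)
            / risingFactorial (θ / J) (c j)
      = 1 :=
  sum_coverage_estimators_eq_one_general θ hθ J hJ n c hc
end

section
/- Fix z > 0 and k ≥ 1. Then the limit as n → ∞ of z^k · C(n, k; α_n) / Σ_{j=0}^{n} z^j · C(n, j; α_n), evaluated at any fixed α ∈ (0,1) with the coefficients C(n, k; α) normalized so the ratio is well-defined, equals e^{-z} · z^{k-1}/(k-1)!; equivalently, the normalized generalized factorial coefficients z^k C(n,k;α)/Σ_k z^k C(n,k;α) converge to a shifted Poisson(z) mass at k-1 as n → ∞. -/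
open Finset

/-!
Divided by `(-α)_n`, the coefficient `C(n, k; α)` becomes `(1/k!) ∑ᵢ (-1)^i C(k, i) Rᵢ(n)` with
`Rᵢ(n) = (-iα)_n / (-α)_n = ∏_{j<n} (j - iα)/(j - α)`. Here `R₀(n) = 0` for `n ≥ 1`, `R₁ = 1`, and
for `i ≥ 2` the factors with `j ≥ i` are at most `1 - (i-1)α/(j+1)`, so `Rᵢ(n) → 0` by the
divergence of the harmonic series. Hence `C(n, k; α)/(-α)_n → -k/k!`. Moreover `|Rᵢ(n)| ≤ K^i`
uniformly in `n`, so `|C(n, k; α)/(-α)_n| ≤ (K+1)^k/k!`, and dominated convergence gives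
`∑_j z^j C(n, j; α)/(-α)_n → -∑_j j z^j/j! = -z e^z`. The quotient of the two limits is
`e^{-z} z^{k-1}/(k-1)!`.
-/

open Filter Topology
open scoped Nat

lemma tendsto_prod_range_zero_of_le_one_sub {f g : ℕ → ℝ} (hf : ∀ j, 0 ≤ f j)
    (hfg : ∀ j, f j ≤ 1 - g j) (hg : ∀ j, 0 ≤ g j) (hg_not : ¬Summable g) :
    Tendsto (fun n => ∏ j ∈ range n, f j) atTop (𝓝 0) := by
  have hsum : Tendsto (fun n => ∑ j ∈ range n, g j) atTop atTop :=
    (not_summable_iff_tendsto_nat_atTop_of_nonneg hg).1 hg_not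
  refine squeeze_zero (fun n => prod_nonneg fun j _ => hf j) (fun n => ?_)
    (Real.tendsto_exp_atBot.comp (tendsto_neg_atTop_atBot.comp hsum))
  calc ∏ j ∈ range n, f j ≤ ∏ j ∈ range n, Real.exp (-g j) :=
        prod_le_prod (fun j _ => hf j) fun j _ =>
          (hfg j).trans (by linarith [Real.add_one_le_exp (-g j)])
    _ = Real.exp (-∑ j ∈ range n, g j) := by rw [← Real.exp_sum, sum_neg_distrib]

noncomputable def rfFactor (α : ℝ) (i j : ℕ) : ℝ := ((j : ℝ) - i * α) / (j - α)

noncomputable def rfRatio (α : ℝ) (i n : ℕ) : ℝ :=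
  risingFactorial (-(i * α)) n / risingFactorial (-α) n

lemma rfRatio_eq_prod (α : ℝ) (i n : ℕ) : rfRatio α i n = ∏ j ∈ range n, rfFactor α i j := by
  simp only [rfRatio, rfFactor, risingFactorial, ← prod_div_distrib]
  exact prod_congr rfl fun j _ => by ring

lemma rfRatio_add (α : ℝ) (i m n : ℕ) :
    rfRatio α i (m + n) = rfRatio α i m * ∏ t ∈ range n, rfFactor α i (m + t) := by
  simp only [rfRatio_eq_prod, prod_range_add]

lemma rfRatio_zero_left {α : ℝ} {n : ℕ} (hn : n ≠ 0) : rfRatio α 0 n = 0 := by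
  rw [rfRatio_eq_prod]
  exact prod_eq_zero (mem_range.2 (Nat.pos_of_ne_zero hn)) (by simp [rfFactor])

lemma genFacCoef_div_risingFactorial (n k : ℕ) (α : ℝ) :
    genFacCoef n k α / risingFactorial (-α) n =
      (k ! : ℝ)⁻¹ * ∑ i ∈ range (k + 1), (-1) ^ i * k.choose i * rfRatio α i n := by
  simp only [genFacCoef, rfRatio, one_div, mul_div_assoc, sum_div]

section UnitInterval

variable {α : ℝ}

lemma exists_pos_forall_mul_succ_le_abs (hα : α ∈ Set.Ioo 0 1) :
    ∃ c > 0, ∀ j : ℕ, c * (j + 1) ≤ |(j : ℝ) - α| := by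
  obtain ⟨hα0, hα1⟩ := hα
  have hc : 0 < min α (1 - α) := lt_min hα0 (by linarith)
  refine ⟨min α (1 - α) / 2, by positivity, fun j => ?_⟩
  rcases Nat.eq_zero_or_pos j with rfl | hj
  · rw [Nat.cast_zero, zero_sub, abs_neg, abs_of_pos hα0]
    linarith [min_le_left α (1 - α)]
  · have hj1 : (1 : ℝ) ≤ j := by exact_mod_cast hj
    rw [abs_of_pos (by linarith)]
    nlinarith [min_le_right α (1 - α)]

lemma natCast_sub_ne_zero (hα : α ∈ Set.Ioo 0 1) (j : ℕ) : (j : ℝ) - α ≠ 0 := by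
  obtain ⟨c, hc, hcj⟩ := exists_pos_forall_mul_succ_le_abs hα
  exact abs_pos.1 ((by positivity : 0 < c * (j + 1)).trans_le (hcj j))

lemma risingFactorial_neg_ne_zero (hα : α ∈ Set.Ioo 0 1) (n : ℕ) :
    risingFactorial (-α) n ≠ 0 :=
  prod_ne_zero_iff.2 fun j _ => by
    rw [neg_add_eq_sub]
    exact natCast_sub_ne_zero hα j

lemma rfRatio_one_left (hα : α ∈ Set.Ioo 0 1) (n : ℕ) : rfRatio α 1 n = 1 := by
  rw [rfRatio_eq_prod]
  exact prod_eq_one fun j _ => by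
    rw [rfFactor, Nat.cast_one, one_mul, div_self (natCast_sub_ne_zero hα j)]

lemma abs_rfFactor_le_of_lt (hα : α ∈ Set.Ioo 0 1) {c : ℝ} (hc : 0 < c)
    (hcj : ∀ j : ℕ, c * (j + 1) ≤ |(j : ℝ) - α|) {i j : ℕ} (hji : j < i) :
    |rfFactor α i j| ≤ i / c / (j + 1) := by
  obtain ⟨hα0, hα1⟩ := hα
  have hji' : (j : ℝ) < i := by exact_mod_cast hji
  have hiα : (i : ℝ) * α ≤ i := mul_le_of_le_one_right (Nat.cast_nonneg i) hα1.le
  have hnum : |(j : ℝ) - i * α| ≤ i := abs_le.2 ⟨by nlinarith [Nat.cast_nonneg (α := ℝ) j],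
    by nlinarith [Nat.cast_nonneg (α := ℝ) i]⟩
  rw [rfFactor, abs_div, div_div]
  exact div_le_div₀ (Nat.cast_nonneg i) hnum (by positivity) (hcj j)

lemma rfFactor_nonneg (hα : α ∈ Set.Ioo 0 1) {i j : ℕ} (hi : 1 ≤ i) (hij : i ≤ j) :
    0 ≤ rfFactor α i j := by
  have hij' : (i : ℝ) ≤ j := by exact_mod_cast hij
  have hi' : (1 : ℝ) ≤ i := by exact_mod_cast hi
  exact div_nonneg (by nlinarith [hα.2]) (by linarith [hα.2])

lemma rfFactor_le_one_sub (hα : α ∈ Set.Ioo 0 1) {i j : ℕ} (hi : 1 ≤ i) (hij : i ≤ j) :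
    rfFactor α i j ≤ 1 - (i - 1) * α / (j + 1) := by
  have hij' : (i : ℝ) ≤ j := by exact_mod_cast hij
  have hi' : (1 : ℝ) ≤ i := by exact_mod_cast hi
  have hden : 0 < (j : ℝ) - α := by linarith [hα.2]
  have hsplit : rfFactor α i j = 1 - (i - 1) * α / (j - α) := by
    rw [rfFactor]
    field_simp
    ring
  rw [hsplit]
  exact sub_le_sub_left (div_le_div_of_nonneg_left (mul_nonneg (by linarith) hα.1.le) hden
    (by linarith [hα.1])) 1

lemma abs_rfRatio_le_of_le (hα : α ∈ Set.Ioo 0 1) {c : ℝ} (hc : 0 < c)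
    (hcj : ∀ j : ℕ, c * (j + 1) ≤ |(j : ℝ) - α|) {i n : ℕ} (hni : n ≤ i) :
    |rfRatio α i n| ≤ (i / c) ^ n / n ! := by
  have hbound : (i / c) ^ n / n ! = ∏ j ∈ range n, (i / c / ((j : ℝ) + 1)) := by
    rw [prod_div_distrib, prod_const, card_range, ← prod_range_add_one_eq_factorial]
    push_cast
    rfl
  rw [rfRatio_eq_prod, abs_prod, hbound]
  exact prod_le_prod (fun j _ => abs_nonneg _) fun j hj =>
    abs_rfFactor_le_of_lt hα hc hcj ((mem_range.1 hj).trans_le hni)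

lemma exists_abs_rfRatio_le_pow (hα : α ∈ Set.Ioo 0 1) :
    ∃ K : ℝ, ∀ i n : ℕ, |rfRatio α i n| ≤ K ^ i := by
  obtain ⟨c, hc, hcj⟩ := exists_pos_forall_mul_succ_le_abs hα
  refine ⟨Real.exp c⁻¹, fun i n => ?_⟩
  have hle : ∀ m ≤ i, |rfRatio α i m| ≤ Real.exp c⁻¹ ^ i := fun m hm => by
    rw [← Real.exp_nat_mul, ← div_eq_mul_inv]
    exact (abs_rfRatio_le_of_le hα hc hcj hm).trans
      (Real.pow_div_factorial_le_exp _ (by positivity) m)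
  by_cases hni : n ≤ i
  · exact hle n hni
  obtain ⟨t, rfl⟩ := Nat.exists_eq_add_of_le (not_le.1 hni).le
  rcases Nat.eq_zero_or_pos i with rfl | hi
  · rw [rfRatio_zero_left (by omega), abs_zero]
    positivity
  -- past `j = i` every factor lies in `[0, 1]`
  rw [rfRatio_add, abs_mul, abs_prod]
  refine (mul_le_of_le_one_right (abs_nonneg _) (prod_le_one (fun _ _ => abs_nonneg _)
    fun t _ => ?_)).trans (hle i le_rfl)
  have hit := Nat.le_add_right i t
  rw [abs_of_nonneg (rfFactor_nonneg hα hi hit)]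
  refine (rfFactor_le_one_sub hα hi hit).trans (sub_le_self 1 (div_nonneg ?_ (by positivity)))
  exact mul_nonneg (sub_nonneg.2 (by exact_mod_cast hi)) hα.1.le

lemma tendsto_rfRatio_zero_of_two_le (hα : α ∈ Set.Ioo 0 1) {i : ℕ} (hi : 2 ≤ i) :
    Tendsto (rfRatio α i) atTop (𝓝 0) := by
  have hi1 : 1 ≤ i := by omega
  rw [← tendsto_add_atTop_iff_nat i]
  simp_rw [add_comm _ i, rfRatio_add]
  rw [← mul_zero (rfRatio α i i)]
  refine tendsto_const_nhds.mul (tendsto_prod_range_zero_of_le_one_sub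
    (g := fun t => (i - 1) * α / ((i + t : ℕ) + 1))
    (fun t => rfFactor_nonneg hα hi1 (Nat.le_add_right i t))
    (fun t => rfFactor_le_one_sub hα hi1 (Nat.le_add_right i t))
    (fun t => div_nonneg (mul_nonneg (sub_nonneg.2 (by exact_mod_cast hi1)) hα.1.le)
      (by positivity)) ?_)
  -- the terms are a nonzero multiple of a tail of the harmonic series
  intro hsum
  have hC : ((i : ℝ) - 1) * α ≠ 0 :=
    mul_ne_zero (sub_ne_zero.2 (by exact_mod_cast (by omega : i ≠ 1))) hα.1.ne'
  refine Real.not_summable_one_div_natCast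
    ((summable_nat_add_iff (f := fun n : ℕ => 1 / (n : ℝ)) (i + 1)).1 ?_)
  refine (summable_mul_left_iff hC).1 (hsum.congr fun t => ?_)
  push_cast
  ring

lemma tendsto_rfRatio (hα : α ∈ Set.Ioo 0 1) (i : ℕ) :
    Tendsto (rfRatio α i) atTop (𝓝 (if i = 1 then 1 else 0)) := by
  obtain _ | _ | i := i
  · exact tendsto_const_nhds.congr'
      ((eventually_ne_atTop 0).mono fun n hn => (rfRatio_zero_left hn).symm)
  · rw [if_pos rfl]
    exact tendsto_const_nhds.congr fun n => (rfRatio_one_left hα n).symm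
  · exact tendsto_rfRatio_zero_of_two_le hα (by omega)

lemma tendsto_genFacCoef_div_risingFactorial (hα : α ∈ Set.Ioo 0 1) (k : ℕ) :
    Tendsto (fun n => genFacCoef n k α / risingFactorial (-α) n) atTop
      (𝓝 (-(k / k !))) := by
  simp_rw [genFacCoef_div_risingFactorial]
  have hsum := tendsto_finsetSum (range (k + 1)) fun i _ =>
    (tendsto_rfRatio hα i).const_mul ((-1 : ℝ) ^ i * k.choose i)
  convert hsum.const_mul (k ! : ℝ)⁻¹ using 2
  simp only [mul_ite, mul_one, mul_zero, sum_ite_eq', mem_range, pow_one, Nat.choose_one_right]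
  split_ifs with hk
  · field_simp
  · obtain rfl : k = 0 := by omega
    simp

lemma exists_abs_genFacCoef_div_le (hα : α ∈ Set.Ioo 0 1) :
    ∃ K : ℝ, ∀ n k : ℕ, |genFacCoef n k α / risingFactorial (-α) n| ≤ K ^ k / k ! := by
  obtain ⟨K, hK⟩ := exists_abs_rfRatio_le_pow hα
  refine ⟨K + 1, fun n k => ?_⟩
  rw [genFacCoef_div_risingFactorial, abs_mul, abs_inv, Nat.abs_cast, inv_mul_eq_div]
  gcongr
  calc |∑ i ∈ range (k + 1), (-1) ^ i * k.choose i * rfRatio α i n|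
      ≤ ∑ i ∈ range (k + 1), |(-1) ^ i * k.choose i * rfRatio α i n| := abs_sum_le_sum_abs _ _
    _ ≤ ∑ i ∈ range (k + 1), K ^ i * 1 ^ (k - i) * k.choose i := by
      gcongr with i
      rw [abs_mul, abs_mul, abs_pow, abs_neg, abs_one, one_pow, one_mul, Nat.abs_cast, one_pow,
        mul_one, mul_comm]
      exact mul_le_mul_of_nonneg_right (hK i n) (Nat.cast_nonneg _)
    _ = (K + 1) ^ k := (add_pow K 1 k).symm

lemma hasSum_natCast_mul_pow_div_factorial (z : ℝ) :
    HasSum (fun j : ℕ => j * z ^ j / j !) (z * Real.exp z) := by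
  have hexp := (NormedSpace.expSeries_div_hasSum_exp z).mul_left z
  rw [← Real.exp_eq_exp_ℝ] at hexp
  refine (hasSum_nat_add_iff' 1).1 ?_
  rw [range_one, sum_singleton, Nat.cast_zero, zero_mul, zero_div, sub_zero]
  have hterm : (fun j : ℕ => z * (z ^ j / j !)) =
      fun j : ℕ => ((j + 1 : ℕ) : ℝ) * z ^ (j + 1) / (j + 1)! := by
    funext j
    rw [Nat.factorial_succ, pow_succ]
    push_cast
    field_simp
  rwa [hterm] at hexp

lemma tendsto_sum_pow_mul_genFacCoef_div_risingFactorial (hα : α ∈ Set.Ioo 0 1) (z : ℝ) :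
    Tendsto (fun n => (∑ j ∈ range (n + 1), z ^ j * genFacCoef n j α) / risingFactorial (-α) n)
      atTop (𝓝 (-(z * Real.exp z))) := by
  obtain ⟨K, hK⟩ := exists_abs_genFacCoef_div_le hα
  set F : ℕ → ℕ → ℝ := fun n j =>
    if j ∈ range (n + 1) then z ^ j * (genFacCoef n j α / risingFactorial (-α) n) else 0
  have hF : ∀ n, (∑ j ∈ range (n + 1), z ^ j * genFacCoef n j α) / risingFactorial (-α) n =
      ∑' j, F n j := fun n => by
    rw [tsum_eq_sum (s := range (n + 1)) fun j hj => if_neg hj, sum_div]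
    exact sum_congr rfl fun j hj => by rw [if_pos hj, mul_div_assoc]
  have hlim : -(z * Real.exp z) = ∑' j : ℕ, z ^ j * -(j / j !) := by
    rw [← (hasSum_natCast_mul_pow_div_factorial z).neg.tsum_eq]
    congr with j
    ring
  simp_rw [hF, hlim]
  refine tendsto_tsum_of_dominated_convergence (bound := fun j => |z| ^ j * (K ^ j / j !))
    ((Real.summable_pow_div_factorial (|z| * K)).congr fun j => by rw [mul_pow, mul_div_assoc])
    (fun j => ?_) (Eventually.of_forall fun n j => ?_)
  · refine ((tendsto_genFacCoef_div_risingFactorial hα j).const_mul (z ^ j)).congr' ?_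
    filter_upwards [eventually_ge_atTop j] with n hn
    simp only [F, if_pos (mem_range.2 (Nat.lt_succ_of_le hn))]
  · simp only [F]
    split_ifs
    · rw [Real.norm_eq_abs, abs_mul, abs_pow]
      exact mul_le_mul_of_nonneg_left (hK n j) (by positivity)
    · rw [norm_zero]
      exact mul_nonneg (by positivity) ((abs_nonneg _).trans (hK 0 j))

end UnitInterval

theorem normalized_genFacCoef_tendsto_poisson (z : ℝ) (hz : 0 < z) (k : ℕ) (hk : 1 ≤ k)
    (α : ℝ) (hα : α ∈ Set.Ioo 0 1) :
    Filter.Tendsto (fun n : ℕ =>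
        z ^ k * genFacCoef n k α / ∑ j ∈ Finset.range (n + 1), z ^ j * genFacCoef n j α)
      Filter.atTop
      (nhds (Real.exp (-z) * z ^ (k - 1) / ((k - 1).factorial : ℝ))) := by
  have hlim := ((tendsto_genFacCoef_div_risingFactorial hα k).const_mul (z ^ k)).div
    (tendsto_sum_pow_mul_genFacCoef_div_risingFactorial hα z)
    (neg_ne_zero.2 (mul_pos hz (Real.exp_pos z)).ne')
  convert hlim using 2 with n
  · rw [Pi.div_apply, ← mul_div_assoc,
      div_div_div_cancel_right₀ (risingFactorial_neg_ne_zero hα n)]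
  · obtain ⟨k, rfl⟩ := Nat.exists_eq_add_of_le' hk
    rw [Nat.add_sub_cancel, Nat.factorial_succ, Real.exp_neg, pow_succ]
    field_simp
    push_cast
    ring
end
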